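/- Let U ⊆ (0,∞) × ℝ be open, let v = (v₁,v₂) : U → ℝ² and define u on {x ∈ ℝ³ : ρ(x) > 0, (ρ(x),x₃) ∈ U}, where ρ(x) = √(x₁²+x₂²), by u(x) = (v₁(ρ(x),x₃) x₁/ρ(x), v₁(ρ(x),x₃) x₂/ρ(x), v₂(ρ(x),x₃)). If v is differentiable at (r,x₃) ∈ U, then u is differentiable at every point x with ρ(x) = r and third coordinate x₃, and det Du(x) = (v₁(r,x₃)/r) · det Dv(r,x₃), where det Dv = ∂_r v₁ ∂_{x₃} v₂ − ∂_{x₃} v₁ ∂_r v₂. -/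

import Mathlib

/-- ρ(x) = √(x₁² + x₂²). -/
noncomputable def rho3 (x : Fin 3 → ℝ) : ℝ :=
  Real.sqrt ((x 0) ^ 2 + (x 1) ^ 2)

/-- The axisymmetric extension of a planar map v = (v₁,v₂):
u(x) = (v₁(ρ(x),x₃) x₁/ρ(x), v₁(ρ(x),x₃) x₂/ρ(x), v₂(ρ(x),x₃)). -/
noncomputable def axext (v : ℝ × ℝ → ℝ × ℝ) (x : Fin 3 → ℝ) : Fin 3 → ℝ :=
  ![(v (rho3 x, x 2)).1 * x 0 / rho3 x,
    (v (rho3 x, x 2)).1 * x 1 / rho3 x,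
    (v (rho3 x, x 2)).2]

/-- Jacobian matrix of a map ℝ³ → ℝ³ at a point: entry (k,i) is ∂f_k/∂x_i. -/
noncomputable def jac3 (f : (Fin 3 → ℝ) → (Fin 3 → ℝ)) (x : Fin 3 → ℝ) :
    Matrix (Fin 3) (Fin 3) ℝ :=
  Matrix.of fun k i => fderiv ℝ f x (Pi.single i 1) k

/-- Jacobian determinant of a planar map v = (v₁,v₂):
det Dv = ∂_r v₁ ∂_{x₃} v₂ − ∂_{x₃} v₁ ∂_r v₂. -/
noncomputable def detDv (v : ℝ × ℝ → ℝ × ℝ) (p : ℝ × ℝ) : ℝ :=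
  (fderiv ℝ v p (1, 0)).1 * (fderiv ℝ v p (0, 1)).2 -
    (fderiv ℝ v p (0, 1)).1 * (fderiv ℝ v p (1, 0)).2

private lemma key9 (r : ℝ) (hrne : r ≠ 0) (X Y A B P Q W : ℝ)
    (h : X ^ 2 + Y ^ 2 = r ^ 2) :
      ((W * X) * (-(r^2)⁻¹) * (X / r) + r⁻¹ * (W + X * (X / r * A))) *
        (((W * Y) * (-(r^2)⁻¹) * (Y / r) + r⁻¹ * (W + Y * (Y / r * A))) * Q -
          (r⁻¹ * (Y * B)) * (Y / r * P)) -
      ((W * X) * (-(r^2)⁻¹) * (Y / r) + r⁻¹ * (X * (Y / r * A))) *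
        (((W * Y) * (-(r^2)⁻¹) * (X / r) + r⁻¹ * (Y * (X / r * A))) * Q -
          (r⁻¹ * (Y * B)) * (X / r * P)) +
      (r⁻¹ * (X * B)) *
        (((W * Y) * (-(r^2)⁻¹) * (X / r) + r⁻¹ * (Y * (X / r * A))) * (Y / r * P) -
          ((W * Y) * (-(r^2)⁻¹) * (Y / r) + r⁻¹ * (W + Y * (Y / r * A))) * (X / r * P)) =
      W / r * (A * Q - B * P) := by
  field_simp
  linear_combination (W * r^2 * (r*(A*Q - B*P) - W*Q)) * h

/-- If v is differentiable at (r,x₃) ∈ U ⊆ (0,∞) × ℝ (U open), then the axisymmetric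
extension u is differentiable at every x with ρ(x) = r and x₃-coordinate x₃, and
det Du(x) = (v₁(r,x₃)/r) det Dv(r,x₃). -/
theorem stmt9 (U : Set (ℝ × ℝ)) (hUopen : IsOpen U) (hUpos : ∀ p ∈ U, 0 < p.1)
    (v : ℝ × ℝ → ℝ × ℝ) (r x₃ : ℝ) (hmem : (r, x₃) ∈ U)
    (hv : DifferentiableAt ℝ v (r, x₃))
    (x : Fin 3 → ℝ) (hx : rho3 x = r) (hx3 : x 2 = x₃) :
    DifferentiableAt ℝ (axext v) x ∧
    (jac3 (axext v) x).det = (v (r, x₃)).1 / r * detDv v (r, x₃) := by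
  have hr : 0 < r := hUpos _ hmem
  have hrne : r ≠ 0 := ne_of_gt hr
  have hq : x 0 ^ 2 + x 1 ^ 2 = r ^ 2 := by
    have h := Real.sq_sqrt (by positivity : (0:ℝ) ≤ x 0 ^ 2 + x 1 ^ 2)
    have hx' : Real.sqrt (x 0 ^ 2 + x 1 ^ 2) = r := hx
    rw [hx'] at h
    linarith
  set e : Fin 3 → ((Fin 3 → ℝ) →L[ℝ] ℝ) :=
    fun i => ContinuousLinearMap.proj i with he
  set Lρ : (Fin 3 → ℝ) →L[ℝ] ℝ :=
    (1/(2*r)) • ((2 * x 0) • e 0 + (2 * x 1) • e 1) with hLρ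
  have hρ : HasFDerivAt rho3 Lρ x := by
    have h0 : HasFDerivAt (fun y : Fin 3 → ℝ => y 0) (e 0) x := hasFDerivAt_apply 0 x
    have h1 : HasFDerivAt (fun y : Fin 3 → ℝ => y 1) (e 1) x := hasFDerivAt_apply 1 x
    have hqd : HasFDerivAt (fun y : Fin 3 → ℝ => y 0 ^ 2 + y 1 ^ 2)
        ((2 * x 0) • e 0 + (2 * x 1) • e 1) x := by
      have := (h0.mul h0).add (h1.mul h1)
      simpa [pow_two, two_mul, add_smul, Pi.mul_def, Pi.add_def] using this
    have hne : x 0 ^ 2 + x 1 ^ 2 ≠ 0 := by rw [hq]; positivity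
    have h := (Real.hasDerivAt_sqrt hne).comp_hasFDerivAt x hqd
    have hx' : Real.sqrt (x 0 ^ 2 + x 1 ^ 2) = r := hx
    rw [hx'] at h
    exact h
  set DG : (Fin 3 → ℝ) →L[ℝ] (ℝ × ℝ) := Lρ.prod (e 2) with hDG
  have hG : HasFDerivAt (fun y => (rho3 y, y 2)) DG x :=
    hρ.prodMk (hasFDerivAt_apply 2 x)
  have hGx : (rho3 x, x 2) = (r, x₃) := by rw [hx, hx3]
  set Dv : (ℝ × ℝ) →L[ℝ] (ℝ × ℝ) := fderiv ℝ v (r, x₃) with hDvdef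
  have hDv : HasFDerivAt v Dv (rho3 x, x 2) := by rw [hGx]; exact hv.hasFDerivAt
  have hV : HasFDerivAt (fun y => v (rho3 y, y 2)) (Dv.comp DG) x := hDv.comp x hG
  have hV1 : HasFDerivAt (fun y => (v (rho3 y, y 2)).1)
      ((ContinuousLinearMap.fst ℝ ℝ ℝ).comp (Dv.comp DG)) x := hV.fst
  have hρne : rho3 x ≠ 0 := by rw [hx]; exact hrne
  have hinv : HasFDerivAt (fun y => (rho3 y)⁻¹) ((-(r^2)⁻¹) • Lρ) x := by
    have h := (hasDerivAt_inv hρne).comp_hasFDerivAt x hρ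
    rw [hx] at h
    exact h
  set w : ℝ := (v (r, x₃)).1 with hw
  have hwx : (v (rho3 x, x 2)).1 = w := by rw [hGx]
  set DV1 : (Fin 3 → ℝ) →L[ℝ] ℝ := (ContinuousLinearMap.fst ℝ ℝ ℝ).comp (Dv.comp DG)
    with hDV1
  set D0 : (Fin 3 → ℝ) →L[ℝ] ℝ :=
    (w * x 0) • ((-(r^2)⁻¹) • Lρ) + r⁻¹ • (w • e 0 + x 0 • DV1) with hD0
  set D1 : (Fin 3 → ℝ) →L[ℝ] ℝ :=
    (w * x 1) • ((-(r^2)⁻¹) • Lρ) + r⁻¹ • (w • e 1 + x 1 • DV1) with hD1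
  set D2 : (Fin 3 → ℝ) →L[ℝ] ℝ := (ContinuousLinearMap.snd ℝ ℝ ℝ).comp (Dv.comp DG)
    with hD2
  have hg0 : HasFDerivAt (fun y => (v (rho3 y, y 2)).1 * y 0 * (rho3 y)⁻¹) D0 x := by
    have hN : HasFDerivAt (fun y => (v (rho3 y, y 2)).1 * y 0)
        ((v (rho3 x, x 2)).1 • e 0 + x 0 • DV1) x := hV1.mul (hasFDerivAt_apply 0 x)
    have h := hN.mul hinv
    rw [hwx, hx] at h
    exact h
  have hg1 : HasFDerivAt (fun y => (v (rho3 y, y 2)).1 * y 1 * (rho3 y)⁻¹) D1 x := by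
    have hN : HasFDerivAt (fun y => (v (rho3 y, y 2)).1 * y 1)
        ((v (rho3 x, x 2)).1 • e 1 + x 1 • DV1) x := hV1.mul (hasFDerivAt_apply 1 x)
    have h := hN.mul hinv
    rw [hwx, hx] at h
    exact h
  have hg2 : HasFDerivAt (fun y => (v (rho3 y, y 2)).2) D2 x := hV.snd
  have haxeq : axext v = fun y i => (![fun y => (v (rho3 y, y 2)).1 * y 0 * (rho3 y)⁻¹,
      fun y => (v (rho3 y, y 2)).1 * y 1 * (rho3 y)⁻¹,
      fun y => (v (rho3 y, y 2)).2] : Fin 3 → (Fin 3 → ℝ) → ℝ) i y := by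
    funext y i
    fin_cases i <;> simp [axext, div_eq_mul_inv]
  have hF : HasFDerivAt (axext v) (ContinuousLinearMap.pi ![D0, D1, D2]) x := by
    rw [haxeq]
    refine hasFDerivAt_pi.mpr ?_
    intro i
    fin_cases i
    · simpa using hg0
    · simpa using hg1
    · simpa using hg2
  refine ⟨hF.differentiableAt, ?_⟩
  have hfd : fderiv ℝ (axext v) x = ContinuousLinearMap.pi ![D0, D1, D2] := hF.fderiv
  set a : ℝ := (Dv (1, 0)).1 with ha
  set b : ℝ := (Dv (0, 1)).1 with hb
  set p : ℝ := (Dv (1, 0)).2 with hp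
  set q : ℝ := (Dv (0, 1)).2 with hqq
  have hDv10 : ∀ t : ℝ, Dv (t, 0) = t • Dv (1, 0) := by
    intro t
    rw [show ((t, 0) : ℝ × ℝ) = t • ((1 : ℝ), (0 : ℝ)) by simp, map_smul]
  have hL : ∀ i : Fin 3, Lρ (Pi.single i 1) =
      (1/(2*r)) * (2 * x 0 * (Pi.single i 1 : Fin 3 → ℝ) 0
        + 2 * x 1 * (Pi.single i 1 : Fin 3 → ℝ) 1) := by
    intro i; simp [hLρ, he]; ring
  have hL0 : Lρ (Pi.single 0 1) = x 0 / r := by rw [hL]; simp [Pi.single_apply]; ring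
  have hL1 : Lρ (Pi.single 1 1) = x 1 / r := by rw [hL]; simp [Pi.single_apply]; ring
  have hL2 : Lρ (Pi.single 2 1) = 0 := by rw [hL]; simp [Pi.single_apply]
  have hDG0 : DG (Pi.single 0 1) = (x 0 / r, 0) := by
    simp [hDG, hL0, he, Pi.single_apply]
  have hDG1 : DG (Pi.single 1 1) = (x 1 / r, 0) := by
    simp [hDG, hL1, he, Pi.single_apply]
  have hDG2 : DG (Pi.single 2 1) = (0, 1) := by
    simp [hDG, hL2, he, Pi.single_apply]
  have hDV10 : DV1 (Pi.single 0 1) = x 0 / r * a := by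
    rw [hDV1]
    simp only [ContinuousLinearMap.comp_apply, ContinuousLinearMap.coe_fst']
    rw [hDG0, hDv10]
    simp [ha]
  have hDV11 : DV1 (Pi.single 1 1) = x 1 / r * a := by
    rw [hDV1]
    simp only [ContinuousLinearMap.comp_apply, ContinuousLinearMap.coe_fst']
    rw [hDG1, hDv10]
    simp [ha]
  have hDV12 : DV1 (Pi.single 2 1) = b := by
    rw [hDV1]
    simp only [ContinuousLinearMap.comp_apply, ContinuousLinearMap.coe_fst']
    rw [hDG2, hb]
  have hD00 : D0 (Pi.single 0 1) =
      (w * x 0) * (-(r^2)⁻¹) * (x 0 / r) + r⁻¹ * (w + x 0 * (x 0 / r * a)) := by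
    simp only [hD0, ContinuousLinearMap.add_apply, ContinuousLinearMap.smul_apply,
      hDV10, hL0, he, ContinuousLinearMap.proj_apply]
    simp [Pi.single_apply]
    ring
  have hD01 : D0 (Pi.single 1 1) =
      (w * x 0) * (-(r^2)⁻¹) * (x 1 / r) + r⁻¹ * (x 0 * (x 1 / r * a)) := by
    simp only [hD0, ContinuousLinearMap.add_apply, ContinuousLinearMap.smul_apply,
      hDV11, hL1, he, ContinuousLinearMap.proj_apply]
    simp [Pi.single_apply]
    ring
  have hD02 : D0 (Pi.single 2 1) = r⁻¹ * (x 0 * b) := by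
    simp only [hD0, ContinuousLinearMap.add_apply, ContinuousLinearMap.smul_apply,
      hDV12, hL2, he, ContinuousLinearMap.proj_apply]
    simp [Pi.single_apply]
  have hD10 : D1 (Pi.single 0 1) =
      (w * x 1) * (-(r^2)⁻¹) * (x 0 / r) + r⁻¹ * (x 1 * (x 0 / r * a)) := by
    simp only [hD1, ContinuousLinearMap.add_apply, ContinuousLinearMap.smul_apply,
      hDV10, hL0, he, ContinuousLinearMap.proj_apply]
    simp [Pi.single_apply]
    ring
  have hD11 : D1 (Pi.single 1 1) =
      (w * x 1) * (-(r^2)⁻¹) * (x 1 / r) + r⁻¹ * (w + x 1 * (x 1 / r * a)) := by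
    simp only [hD1, ContinuousLinearMap.add_apply, ContinuousLinearMap.smul_apply,
      hDV11, hL1, he, ContinuousLinearMap.proj_apply]
    simp [Pi.single_apply]
    ring
  have hD12 : D1 (Pi.single 2 1) = r⁻¹ * (x 1 * b) := by
    simp only [hD1, ContinuousLinearMap.add_apply, ContinuousLinearMap.smul_apply,
      hDV12, hL2, he, ContinuousLinearMap.proj_apply]
    simp [Pi.single_apply]
  have hD20 : D2 (Pi.single 0 1) = x 0 / r * p := by
    rw [hD2]
    simp only [ContinuousLinearMap.comp_apply, ContinuousLinearMap.coe_snd']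
    rw [hDG0, hDv10]
    simp [hp]
  have hD21 : D2 (Pi.single 1 1) = x 1 / r * p := by
    rw [hD2]
    simp only [ContinuousLinearMap.comp_apply, ContinuousLinearMap.coe_snd']
    rw [hDG1, hDv10]
    simp [hp]
  have hD22 : D2 (Pi.single 2 1) = q := by
    rw [hD2]
    simp only [ContinuousLinearMap.comp_apply, ContinuousLinearMap.coe_snd']
    rw [hDG2, hqq]
  have hent : ∀ (k i : Fin 3), jac3 (axext v) x k i =
      (![D0, D1, D2] : Fin 3 → ((Fin 3 → ℝ) →L[ℝ] ℝ)) k (Pi.single i 1) := by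
    intro k i
    simp [jac3, hfd, ContinuousLinearMap.pi_apply]
  have hdet : detDv v (r, x₃) = a * q - b * p := by
    rw [detDv, ha, hb, hp, hqq, hDvdef]
  rw [Matrix.det_fin_three]
  simp only [hent, Matrix.cons_val_zero, Matrix.cons_val_one, Matrix.head_cons,
    Matrix.cons_val_two, Matrix.tail_cons]
  rw [hD00, hD01, hD02, hD10, hD11, hD12, hD20, hD21, hD22, hdet]
  linear_combination key9 r hrne (x 0) (x 1) a b p q w hq
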